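/- Let q̄ : S₂(ℂ) → (E'(ℂ) ∖ E'[2])/inv be the continuous map induced by the second projection (P,Q) ↦ Q. Then for every Q₀ ∈ E'(ℂ) ∖ E'[2], the fiber q̄⁻¹([Q₀]) (with the subspace topology) is homeomorphic to E(ℂ). -/

import Mathlib

open scoped LinearAlgebra.Projectivization
open Projectivization Complex

noncomputable section

/-- Complex projective plane `ℙ²(ℂ)` with the Euclidean (quotient) topology. -/
instance : TopologicalSpace (ℙ ℂ (Fin 3 → ℂ)) :=
  inferInstanceAs (TopologicalSpace (Quotient (projectivizationSetoid ℂ (Fin 3 → ℂ))))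

lemma ne010 : (![0, 1, 0] : Fin 3 → ℂ) ≠ 0 := fun h => by simpa using congrFun h 1
lemma ne001 : (![0, 0, 1] : Fin 3 → ℂ) ≠ 0 := fun h => by simpa using congrFun h 2
lemma neI01 : (![I, 0, 1] : Fin 3 → ℂ) ≠ 0 := fun h => by simpa using congrFun h 2
lemma nemI01 : (![-I, 0, 1] : Fin 3 → ℂ) ≠ 0 := fun h => by simpa using congrFun h 2

/-- The linear map `(x,y,z) ↦ (x,−y,z)` on `ℂ³`. -/
def negYlin : (Fin 3 → ℂ) →ₗ[ℂ] (Fin 3 → ℂ) where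
  toFun v := fun i => if i = 1 then -v i else v i
  map_add' v w := by
    funext i
    by_cases h : i = 1
    · simp [h, neg_add, add_comm]
    · simp [h]
  map_smul' c v := by funext i; by_cases h : i = 1 <;> simp [h]

lemma negYlin_comp : negYlin.comp negYlin = LinearMap.id := by
  ext v i
  by_cases h : i = 1 <;> simp [negYlin, h]

lemma negYlin_inj : Function.Injective negYlin := fun v w h => by
  have := congrArg negYlin h
  simpa [← LinearMap.comp_apply, negYlin_comp] using this

/-- The involution `inv : [x:y:z] ↦ [x:−y:z]` (negation on the curves) on `ℙ²(ℂ)`. -/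
def invP : ℙ ℂ (Fin 3 → ℂ) → ℙ ℂ (Fin 3 → ℂ) := Projectivization.map negYlin negYlin_inj

lemma negYlin_negYlin (v : Fin 3 → ℂ) : negYlin (negYlin v) = v := by
  funext i; by_cases h : i = 1 <;> simp [negYlin, h]

lemma invP_invol (p : ℙ ℂ (Fin 3 → ℂ)) : invP (invP p) = p := by
  induction p using Projectivization.ind with
  | h v hv =>
    simp only [invP, Projectivization.map_mk]
    exact (Projectivization.mk_eq_mk_iff' ℂ _ _ _ _).2 ⟨1, by simp [negYlin_negYlin]⟩

/-- `E(ℂ)`: the complex points of `y²z = x³ − 4xz²` in `ℙ²(ℂ)`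
(homogeneous coordinates `x, y, z` are `v 0, v 1, v 2`). -/
def Ecurve : Set (ℙ ℂ (Fin 3 → ℂ)) :=
  {p | ∃ (v : Fin 3 → ℂ) (hv : v ≠ 0), Projectivization.mk ℂ v hv = p ∧
    (v 1) ^ 2 * v 2 = (v 0) ^ 3 - 4 * v 0 * (v 2) ^ 2}

/-- `E'(ℂ)`: the complex points of `y²z = x³ + xz²` in `ℙ²(ℂ)`
(homogeneous coordinates `x, y, z` are `v 0, v 1, v 2`). -/
def E'curve : Set (ℙ ℂ (Fin 3 → ℂ)) :=
  {p | ∃ (v : Fin 3 → ℂ) (hv : v ≠ 0), Projectivization.mk ℂ v hv = p ∧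
    (v 1) ^ 2 * v 2 = (v 0) ^ 3 + v 0 * (v 2) ^ 2}

/-- The 2-torsion points `E'[2] = {[0:1:0], [0:0:1], [i:0:1], [−i:0:1]}` of `E'`. -/
def E'two : Set (ℙ ℂ (Fin 3 → ℂ)) :=
  {Projectivization.mk ℂ ![0, 1, 0] ne010, Projectivization.mk ℂ ![0, 0, 1] ne001,
   Projectivization.mk ℂ ![I, 0, 1] neI01, Projectivization.mk ℂ ![-I, 0, 1] nemI01}

/-- The underlying space of `S₂`: `E(ℂ) × (E'(ℂ) ∖ E'[2])`. -/
abbrev X2 : Type :=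
  {p : ℙ ℂ (Fin 3 → ℂ) × ℙ ℂ (Fin 3 → ℂ) // p.1 ∈ Ecurve ∧ p.2 ∈ E'curve ∧ p.2 ∉ E'two}

/-- Identification of `(P,Q)` with `(−P,−Q)` (the diagonal action of `inv`). -/
def s2Setoid : Setoid X2 where
  r a b := b.1 = a.1 ∨ (b.1.1 = invP a.1.1 ∧ b.1.2 = invP a.1.2)
  iseqv := by
    constructor
    · exact fun a => Or.inl rfl
    · rintro a b (h | ⟨h1, h2⟩)
      · exact Or.inl h.symm
      · exact Or.inr ⟨by rw [h1, invP_invol], by rw [h2, invP_invol]⟩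
    · rintro a b c (hb | ⟨hb1, hb2⟩) (hc | ⟨hc1, hc2⟩)
      · exact Or.inl (hc.trans hb)
      · exact Or.inr ⟨by rw [hc1, hb], by rw [hc2, hb]⟩
      · exact Or.inr ⟨by rw [hc, hb1], by rw [hc, hb2]⟩
      · exact Or.inl (Prod.ext (by rw [hc1, hb1, invP_invol]) (by rw [hc2, hb2, invP_invol]))

/-- `S₂(ℂ) = (E(ℂ) × (E'(ℂ) ∖ E'[2])) / inv`, with the quotient topology. -/
abbrev S2C : Type := Quotient s2Setoid

/-- The subspace `E'(ℂ) ∖ E'[2]` of `ℙ²(ℂ)`. -/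
abbrev E'openSub : Type := {p : ℙ ℂ (Fin 3 → ℂ) // p ∈ E'curve ∧ p ∉ E'two}

/-- Identification of `Q` with `−Q` on `E'(ℂ) ∖ E'[2]`. -/
def baseSetoid : Setoid E'openSub where
  r a b := b.1 = a.1 ∨ b.1 = invP a.1
  iseqv := by
    constructor
    · exact fun a => Or.inl rfl
    · rintro a b (h | h)
      · exact Or.inl h.symm
      · exact Or.inr (by rw [h, invP_invol])
    · rintro a b c (hb | hb) (hc | hc)
      · exact Or.inl (hc.trans hb)
      · exact Or.inr (by rw [hc, hb])
      · exact Or.inr (by rw [hc, hb])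
      · exact Or.inl (by rw [hc, hb, invP_invol])

/-- `(E'(ℂ) ∖ E'[2]) / inv`, with the quotient topology. -/
abbrev E'base : Type := Quotient baseSetoid

/-- The map `q̄ : S₂(ℂ) → (E'(ℂ) ∖ E'[2])/inv` induced by the second projection
`(P,Q) ↦ Q`. -/
def qbar : S2C → E'base :=
  Quotient.map' (fun a => ⟨a.1.2, a.2.2.1, a.2.2.2⟩)
    (by rintro a b (h | ⟨h1, h2⟩)
        · exact Or.inl (congrArg Prod.snd h)
        · exact Or.inr h2)

/-! Since `Q₀ ∉ E'[2]`, the involution moves `Q₀`, so (`ℙ²(ℂ)` being Hausdorff) `Q₀` has an open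
neighbourhood `U` disjoint from `inv U`. No two points of the open slice `E × U` are identified
in `S₂`, and the quotient map by an involution is open, so it restricts to an open embedding of
`E × U`, and hence to an embedding of `E × {Q₀}`. Its image is the fibre over `[Q₀]`, because
`(P, inv Q₀)` is identified with `(inv P, Q₀)`.

`ℙ²(ℂ)` is Hausdorff because `[v] ↦ v v* / ‖v‖²` is a continuous injection into matrices. -/

open Topology Set

theorem isOpenMap_quotient_mk_of_involutive {X : Type*} [TopologicalSpace X] {s : Setoid X}
    {σ : X → X} (hσ : Continuous σ) (hσ' : Function.Involutive σ)
    (hs : ∀ x y, s x y ↔ y = x ∨ y = σ x) : IsOpenMap (Quotient.mk s) := by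
  intro U hU
  have hsat : Quotient.mk s ⁻¹' (Quotient.mk s '' U) = U ∪ σ ⁻¹' U := by
    ext y
    simp only [mem_preimage, mem_image, Quotient.eq, hs, mem_union]
    constructor
    · rintro ⟨x, hx, rfl | rfl⟩
      exacts [Or.inl hx, Or.inr (by rwa [hσ'])]
    · rintro (hy | hy)
      exacts [⟨y, hy, Or.inl rfl⟩, ⟨σ y, hy, Or.inr (hσ' y).symm⟩]
  exact isOpen_coinduced.2 (hsat ▸ hU.union (hU.preimage hσ))

theorem IsOpenMap.isEmbedding_comp_of_injOn {X Y Z : Type*} [TopologicalSpace X]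
    [TopologicalSpace Y] [TopologicalSpace Z] {f : X → Y} {g : Z → X} {O : Set X}
    (hf : IsOpenMap f) (hfc : Continuous f) (hO : IsOpen O) (hinj : O.InjOn f)
    (hg : IsEmbedding g) (hgO : ∀ z, g z ∈ O) : IsEmbedding (f ∘ g) :=
  (IsOpenEmbedding.of_continuous_injective_isOpenMap (hfc.comp continuous_subtype_val)
    hinj.injective (hf.domRestrict hO)).isEmbedding.comp (hg.codRestrict O hgO)

theorem Continuous.exists_isOpen_mem_apply_notMem {X : Type*} [TopologicalSpace X] [T2Space X]
    {f : X → X} (hf : Continuous f) {x : X} (hx : f x ≠ x) :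
    ∃ U : Set X, IsOpen U ∧ x ∈ U ∧ ∀ y ∈ U, f y ∉ U := by
  obtain ⟨U, V, hU, hV, hxU, hfxV, hUV⟩ := t2_separation hx.symm
  exact ⟨U ∩ f ⁻¹' V, hU.inter (hV.preimage hf), ⟨hxU, hfxV⟩,
    fun y hy hfy => hUV.notMem_of_mem_left hfy.1 hy.2⟩

section LineMatrix

variable {𝕜 ι : Type*} [RCLike 𝕜] [Fintype ι]

open Matrix

def lineMatrix (v : ι → 𝕜) : Matrix ι ι 𝕜 := ((‖v‖ ^ 2 : ℝ) : 𝕜)⁻¹ • vecMulVec v (star v)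

theorem lineMatrix_smul {c : 𝕜} (hc : c ≠ 0) (v : ι → 𝕜) : lineMatrix (c • v) = lineMatrix v := by
  have hcc : c * star c = ((‖c‖ ^ 2 : ℝ) : 𝕜) := by simpa using RCLike.mul_conj c
  ext i j
  simp only [lineMatrix, Matrix.smul_apply, vecMulVec_apply, Pi.smul_apply, Pi.star_apply,
    smul_eq_mul, star_mul', norm_smul, mul_pow]
  have hc' : ((‖c‖ : ℝ) : 𝕜) ≠ 0 := by simpa using hc
  push_cast at hcc ⊢
  rw [show c * v i * (star c * star (v j)) = (c * star c) * (v i * star (v j)) by ring, hcc]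
  field_simp

theorem exists_smul_eq_of_lineMatrix_eq {v w : ι → 𝕜} (hv : v ≠ 0)
    (h : lineMatrix v = lineMatrix w) : ∃ a : 𝕜, a • w = v := by
  obtain ⟨k, hk⟩ := Function.ne_iff.1 hv
  have hvn : ((‖v‖ ^ 2 : ℝ) : 𝕜) ≠ 0 := by simpa using hv
  have hvk : star (v k) ≠ 0 := by simpa using hk
  refine ⟨((‖v‖ ^ 2 : ℝ) : 𝕜) * ((‖w‖ ^ 2 : ℝ) : 𝕜)⁻¹ * star (w k) / star (v k),
    funext fun i => ?_⟩
  have hik := congr_fun (congr_fun h i) k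
  simp only [lineMatrix, Matrix.smul_apply, vecMulVec_apply, Pi.star_apply, smul_eq_mul] at hik
  simp only [Pi.smul_apply, smul_eq_mul]
  field_simp
  field_simp at hik
  linear_combination -hik

theorem continuous_lineMatrix : Continuous fun v : {v : ι → 𝕜 // v ≠ 0} => lineMatrix v.1 :=
  .smul (.inv₀ (f := fun v : {v : ι → 𝕜 // v ≠ 0} => ((‖v.1‖ ^ 2 : ℝ) : 𝕜)) (by fun_prop)
    fun v => by simpa using v.2)
    (.matrix_vecMulVec continuous_subtype_val (continuous_star.comp continuous_subtype_val))

end LineMatrix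

abbrev P2 := ℙ ℂ (Fin 3 → ℂ)

theorem isQuotientMap_mk'_P2 :
    IsQuotientMap (Projectivization.mk' ℂ : {v : Fin 3 → ℂ // v ≠ 0} → P2) :=
  isQuotientMap_quot_mk

def lineMatrixP2 : P2 → Matrix (Fin 3) (Fin 3) ℂ :=
  Projectivization.lift (fun v => lineMatrix v.1) fun v w t h => by
    have ht : t ≠ 0 := by rintro rfl; exact v.2 (by simpa using h)
    rw [h, lineMatrix_smul ht]

theorem continuous_lineMatrixP2 : Continuous lineMatrixP2 :=
  isQuotientMap_mk'_P2.continuous_iff.2 continuous_lineMatrix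

theorem lineMatrixP2_injective : Function.Injective lineMatrixP2 := by
  intro p q h
  induction p using Projectivization.ind with | h v hv =>
  induction q using Projectivization.ind with | h w hw =>
  exact (mk_eq_mk_iff' ℂ v w hv hw).2 (exists_smul_eq_of_lineMatrix_eq hv h)

instance : T2Space P2 := .of_injective_continuous lineMatrixP2_injective continuous_lineMatrixP2

theorem negYlin_ne_zero {v : Fin 3 → ℂ} (hv : v ≠ 0) : negYlin v ≠ 0 :=
  (map_ne_zero_iff negYlin negYlin_inj).2 hv

theorem continuous_invP : Continuous invP :=
  isQuotientMap_mk'_P2.continuous_iff.2 <| isQuotientMap_mk'_P2.continuous.comp <|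
    (negYlin.continuous_of_finiteDimensional.comp continuous_subtype_val).subtype_mk
      fun v => negYlin_ne_zero v.2

theorem invP_mk (v : Fin 3 → ℂ) (hv : v ≠ 0) :
    invP (mk ℂ v hv) = mk ℂ (negYlin v) (negYlin_ne_zero hv) := rfl

theorem invP_mem_Ecurve {p : P2} (hp : p ∈ Ecurve) : invP p ∈ Ecurve := by
  obtain ⟨v, hv, rfl, hvE⟩ := hp
  exact ⟨negYlin v, negYlin_ne_zero hv, rfl, by simpa [negYlin] using hvE⟩

theorem invP_mem_E'curve {p : P2} (hp : p ∈ E'curve) : invP p ∈ E'curve := by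
  obtain ⟨v, hv, rfl, hvE⟩ := hp
  exact ⟨negYlin v, negYlin_ne_zero hv, rfl, by simpa [negYlin] using hvE⟩

theorem mk_eq_mk_of_eq_smul {v w : Fin 3 → ℂ} (hv : v ≠ 0) (hw : w ≠ 0) (t : ℂ)
    (h₀ : v 0 = t * w 0) (h₁ : v 1 = t * w 1) (h₂ : v 2 = t * w 2) : mk ℂ v hv = mk ℂ w hw :=
  (mk_eq_mk_iff' ℂ v w hv hw).2 ⟨t, by ext i; fin_cases i <;> simp [h₀, h₁, h₂]⟩

theorem invP_eq_self_of_mem_E'two {p : P2} (hp : p ∈ E'two) : invP p = p := by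
  rcases hp with rfl | rfl | rfl | rfl <;> rw [invP_mk]
  · exact mk_eq_mk_of_eq_smul _ _ (-1) (by simp [negYlin]) (by simp [negYlin]) (by simp [negYlin])
  all_goals
    exact mk_eq_mk_of_eq_smul _ _ 1 (by simp [negYlin]) (by simp [negYlin]) (by simp [negYlin])

theorem invP_notMem_E'two {p : P2} (hp : p ∉ E'two) : invP p ∉ E'two := fun h =>
  hp (by rwa [← invP_invol p, invP_eq_self_of_mem_E'two h])

theorem eq_zero_or_of_smul_eq_negYlin {v : Fin 3 → ℂ} {a : ℂ} (h : a • v = negYlin v) :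
    v 1 = 0 ∨ v 0 = 0 ∧ v 2 = 0 := by
  have h₀ : a * v 0 = v 0 := by simpa [negYlin] using congr_fun h 0
  have h₁ : a * v 1 = -v 1 := by simpa [negYlin] using congr_fun h 1
  have h₂ : a * v 2 = v 2 := by simpa [negYlin] using congr_fun h 2
  refine or_iff_not_imp_left.2 fun hv₁ => ?_
  have ha : a = -1 := mul_right_cancel₀ hv₁ (by linear_combination h₁)
  subst ha
  exact ⟨by linear_combination -h₀ / 2, by linear_combination -h₂ / 2⟩

theorem mk_mem_E'two_of_apply_one_eq_zero {v : Fin 3 → ℂ} (hv : v ≠ 0)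
    (hE : v 1 ^ 2 * v 2 = v 0 ^ 3 + v 0 * v 2 ^ 2) (hv₁ : v 1 = 0) : mk ℂ v hv ∈ E'two := by
  have hv₂ : v 2 ≠ 0 := by
    intro hv₂
    have hv₀ : v 0 = 0 := pow_eq_zero_iff three_ne_zero |>.1 (by simp_all)
    exact hv (by ext i; fin_cases i <;> assumption)
  have hroots : v 0 * ((v 0 - I * v 2) * (v 0 + I * v 2)) = 0 := by
    linear_combination -hE + v 1 * v 2 * hv₁ - v 0 * v 2 ^ 2 * I_sq
  rcases mul_eq_zero.1 hroots with hx | hx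
  · exact Or.inr <| Or.inl <| mk_eq_mk_of_eq_smul _ _ (v 2) (by simp [hx]) (by simp [hv₁])
      (by simp)
  rcases mul_eq_zero.1 hx with hx | hx
  · exact Or.inr <| Or.inr <| Or.inl <| mk_eq_mk_of_eq_smul _ _ (v 2)
      (by rw [Matrix.cons_val_zero]; linear_combination hx) (by simp [hv₁]) (by simp)
  · exact Or.inr <| Or.inr <| Or.inr <| mk_eq_mk_of_eq_smul _ _ (v 2)
      (by rw [Matrix.cons_val_zero]; linear_combination hx) (by simp [hv₁]) (by simp)

theorem mem_E'two_of_invP_eq_self {p : P2} (hp : p ∈ E'curve) (hfix : invP p = p) :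
    p ∈ E'two := by
  obtain ⟨v, hv, rfl, hE⟩ := hp
  obtain ⟨a, ha⟩ := (mk_eq_mk_iff' ℂ _ _ _ _).1 hfix
  rcases eq_zero_or_of_smul_eq_negYlin ha with hv₁ | ⟨hv₀, hv₂⟩
  · exact mk_mem_E'two_of_apply_one_eq_zero hv hE hv₁
  · exact Or.inl <| mk_eq_mk_of_eq_smul _ _ (v 1) (by simp [hv₀]) (by simp) (by simp [hv₂])

def negX2 (x : X2) : X2 :=
  ⟨(invP x.1.1, invP x.1.2),
    invP_mem_Ecurve x.2.1, invP_mem_E'curve x.2.2.1, invP_notMem_E'two x.2.2.2⟩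

theorem negX2_involutive : Function.Involutive negX2 := fun _ =>
  Subtype.ext (Prod.ext (invP_invol _) (invP_invol _))

theorem continuous_negX2 : Continuous negX2 :=
  (((continuous_invP.comp continuous_fst).prodMk (continuous_invP.comp continuous_snd)).comp
    continuous_subtype_val).subtype_mk _

theorem s2Setoid_r_iff (x y : X2) : s2Setoid x y ↔ y = x ∨ y = negX2 x := by
  change y.1 = x.1 ∨ _ ↔ _
  simp only [Subtype.ext_iff, Prod.ext_iff, negX2]

theorem isOpenMap_mk_s2Setoid : IsOpenMap (Quotient.mk s2Setoid) :=
  isOpenMap_quotient_mk_of_involutive continuous_negX2 negX2_involutive s2Setoid_r_iff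

def pairWith (Q₀ : E'openSub) (P : Ecurve) : X2 := ⟨(P.1, Q₀.1), P.2, Q₀.2⟩

theorem isEmbedding_pairWith (Q₀ : E'openSub) : IsEmbedding (pairWith Q₀) :=
  ((isEmbedding_prodMkLeft Q₀.1).comp IsEmbedding.subtypeVal).codRestrict
    {p | p.1 ∈ Ecurve ∧ p.2 ∈ E'curve ∧ p.2 ∉ E'two} fun P => ⟨P.2, Q₀.2⟩

theorem isEmbedding_mk_pairWith (Q₀ : E'openSub) :
    IsEmbedding (Quotient.mk s2Setoid ∘ pairWith Q₀) := by
  have hQ₀ : invP Q₀.1 ≠ Q₀.1 := fun h => Q₀.2.2 (mem_E'two_of_invP_eq_self Q₀.2.1 h)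
  obtain ⟨U, hU, hQ₀U, hUinv⟩ := continuous_invP.exists_isOpen_mem_apply_notMem hQ₀
  refine isOpenMap_mk_s2Setoid.isEmbedding_comp_of_injOn continuous_quot_mk
    (hU.preimage (continuous_snd.comp continuous_subtype_val)) ?_ (isEmbedding_pairWith Q₀)
    fun _ => hQ₀U
  intro x hx y hy hxy
  rcases (s2Setoid_r_iff x y).1 (Quotient.exact hxy) with rfl | rfl
  · rfl
  · exact absurd hy (hUinv _ hx)

theorem range_mk_pairWith (Q₀ : E'openSub) :
    range (Quotient.mk s2Setoid ∘ pairWith Q₀) = qbar ⁻¹' {Quotient.mk baseSetoid Q₀} := by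
  refine Subset.antisymm (range_subset_iff.2 fun _ => rfl) fun s hs => ?_
  induction s using Quotient.inductionOn with | h x =>
  rcases Quotient.exact hs with h | h
  · exact ⟨⟨x.1.1, x.2.1⟩, congrArg (Quotient.mk s2Setoid) (Subtype.ext (Prod.ext rfl h))⟩
  · refine ⟨⟨invP x.1.1, invP_mem_Ecurve x.2.1⟩,
      Quotient.sound ((s2Setoid_r_iff _ _).2 (Or.inr ?_))⟩
    exact Subtype.ext (Prod.ext (invP_invol _).symm (by simp [negX2, pairWith, h, invP_invol]))

/-- every fiber of `q̄ : S₂(ℂ) → (E'(ℂ) ∖ E'[2])/inv` (the map induced by the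
second projection `(P,Q) ↦ Q`) is homeomorphic to `E(ℂ)`. -/
theorem qbar_fiber_homeo_Ecurve :
    ∀ Q₀ : E'openSub,
      Nonempty (↥(qbar ⁻¹' {Quotient.mk baseSetoid Q₀}) ≃ₜ ↥Ecurve) := fun Q₀ =>
  ⟨((isEmbedding_mk_pairWith Q₀).toHomeomorph.trans (.setCongr (range_mk_pairWith Q₀))).symm⟩
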